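/- A composition of even permutations of a finite set is even; consequently, a transposition (an odd permutation) cannot be written as a composition of permutations each of which fixes-and-ignores at least one element of a binary product structure of even size. In particular, the C^{n-1}NOT gate on n qubits cannot be implemented by composing gates that each act nontrivially on at most n-1 of the n bit positions. -/

import Mathlib

/-! A gate that fixes and ignores bit `i` becomes, after splitting off that bit, `id × τ` on
`Bool × {0,1}^(n-1)`, whose sign is `sign τ ^ 2 = 1`. Signs multiply, so every composition of
such gates is even, whereas `C^{n-1}NOT` swaps two bit strings. -/

/-- A permutation of bit strings "fixes and ignores" position `i` if it never
changes bit `i` and its action on the other bits is independent of bit `i`. -/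
def FixesAndIgnores {n : ℕ} (σ : Equiv.Perm (Fin n → Bool)) (i : Fin n) : Prop :=
  (∀ x, σ x i = x i) ∧
    (∀ x y : Fin n → Bool, (∀ j, j ≠ i → x j = y j) → ∀ j, j ≠ i → σ x j = σ y j)

namespace Equiv.Perm

variable {α β γ : Type*}

theorem sign_list_prod_eq_one [Fintype α] [DecidableEq α] {l : List (Perm α)}
    (hl : ∀ σ ∈ l, sign σ = 1) : sign l.prod = 1 :=
  mem_alternatingGroup.mp <| list_prod_mem fun σ hσ => mem_alternatingGroup.mpr (hl σ hσ)

theorem sign_prodCongrRight_const [Fintype β] [DecidableEq β] [Fintype γ] [DecidableEq γ]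
    (hβ : Even (Fintype.card β)) (τ : Perm γ) : sign (prodCongrRight fun _ : β => τ) = 1 := by
  obtain ⟨k, hk⟩ := hβ
  rw [sign_prodCongrRight, Finset.prod_const, Finset.card_univ, hk, ← two_mul, pow_mul,
    Int.units_sq, one_pow]

theorem exists_eq_prodCongrRight_const [Finite γ] (π : Perm (β × γ)) (b₀ : β)
    (hfst : ∀ p, (π p).1 = p.1) (hsnd : ∀ b y, (π (b, y)).2 = (π (b₀, y)).2) :
    ∃ τ : Perm γ, π = prodCongrRight fun _ => τ := by
  have hinj : Function.Injective fun y => (π (b₀, y)).2 := fun y y' h =>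
    congrArg Prod.snd (π.injective (Prod.ext (by rw [hfst, hfst]) h))
  refine ⟨Equiv.ofBijective _ hinj.bijective_of_finite, ?_⟩
  ext ⟨b, y⟩ <;> simp [hfst, hsnd]

end Equiv.Perm

open Equiv Equiv.Perm

theorem FixesAndIgnores.sign_eq_one {n : ℕ} {σ : Perm (Fin n → Bool)} {i : Fin n}
    (h : FixesAndIgnores σ i) : sign σ = 1 := by
  set e := funSplitAt i Bool
  have hfst : ∀ p, (e.permCongr σ p).1 = p.1 := fun p =>
    (h.1 _).trans (by simp [e, funSplitAt_symm_apply])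
  have hsnd : ∀ b y, (e.permCongr σ (b, y)).2 = (e.permCongr σ (true, y)).2 := fun b y =>
    funext fun j => h.2 _ _ (fun k hk => by simp [e, funSplitAt_symm_apply, hk]) j j.2
  obtain ⟨τ, hτ⟩ := exists_eq_prodCongrRight_const (e.permCongr σ) true hfst hsnd
  rw [← sign_permCongr e σ, hτ, sign_prodCongrRight_const (by simp) τ]

theorem even_comp_and_cnnot_not_decomposable (n : ℕ) (hn : 3 ≤ n) :
    (∀ (α : Type) (_ : Fintype α) (_ : DecidableEq α) (l : List (Equiv.Perm α)),
        (∀ σ ∈ l, Equiv.Perm.sign σ = 1) → Equiv.Perm.sign l.prod = 1) ∧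
      ¬ ∃ l : List (Equiv.Perm (Fin n → Bool)),
          (∀ σ ∈ l, ∃ i : Fin n, FixesAndIgnores σ i) ∧
            l.prod =
              Equiv.swap (fun _ : Fin n => true)
                (Function.update (fun _ : Fin n => true) ⟨n - 1, by omega⟩ false) := by
  refine ⟨fun _ _ _ _ => sign_list_prod_eq_one, ?_⟩
  rintro ⟨l, hl, hprod⟩
  have heven : sign l.prod = 1 :=
    sign_list_prod_eq_one fun σ hσ => (hl σ hσ).elim fun _ hi => hi.sign_eq_one
  have hne : (fun _ : Fin n => true) ≠ Function.update (fun _ => true) ⟨n - 1, by omega⟩ false :=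
    fun h => by simpa using congrFun h ⟨n - 1, by omega⟩
  rw [hprod, sign_swap hne] at heven
  exact absurd heven (by decide)
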